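/- arXiv:1712.08984 — 3 statements merged into one kernel-verified Lean document; each statement's English description precedes it below -/
import Mathlib

section
/- Let q be an odd prime power, ω a generator of F_{q²}^×, and χ a multiplicative character of F_{q²} with values in ℂ (extended by χ(0)=0) whose restriction to F_q^× equals the quadratic character η of F_q. Let ℓ be an integer not divisible by q+1. Then for every s ∈ F_q, as an identity in ℂ, ∑_{x∈F_q, x≠s} χ(1 + ω^ℓ·x)·η(x − s) = (G_{q²}(χ)·G_q(η)/q) · χ^{−1}(1 + ω^{qℓ}·s) · χ(ω^{ℓq} − ω^{ℓ}) − χ(ω^{ℓ}), where χ^{−1} denotes the inverse character of χ. -/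
noncomputable section

open Complex

open scoped Classical

open Classical in
/-- The quadratic character of a finite field, with values in `ℂ`. -/
noncomputable def quadChar (F : Type*) [Field F] : F → ℂ :=
  fun x => if x = 0 then 0 else if IsSquare x then 1 else -1

/-!
Write `W = ω^ℓ` and `b = s + W⁻¹`; the hypothesis `q + 1 ∤ ℓ` says exactly that `W`, hence `b`,
lies outside `F_q`. Substituting `x = s + u` and using `χ = η` on `F_q`, the sum becomes
`χ(W) (L(b) - 1)` with the line sum `L(b) = ∑_{t ∈ F_q} χ(1 + b t)`.
Expanding each `χ(1 + b t)` through the Gauss sum of `χ⁻¹` and summing over `t` first, the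
orthogonality of `ψ` cuts out the kernel of `w ↦ Tr(b w)`. That kernel is the `F_q`-line through
`(b - b^q) / b`, on which `χ⁻¹` restricts to `η`; this gives `G(χ⁻¹) L(b) = q χ(1 - b / b^q) G(η)`.
Together with `G(χ) G(χ⁻¹) = χ(-1) q²` this evaluates `L(b)`, and the stated right-hand side is
the same expression rewritten in terms of `W`.
-/

open Finset

theorem quadChar_eq_quadraticChar (F : Type*) [Field F] [Fintype F] (x : F) :
    quadChar F x = quadraticChar F x := by
  simp only [quadChar, quadraticChar_apply, quadraticCharFun]
  split_ifs <;> simp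

theorem gaussSum_mulShift_of_ne_one {R R' : Type*} [Field R] [Fintype R] [CommRing R']
    [IsDomain R'] {χ : MulChar R R'} (hχ : χ ≠ 1) (ψ : AddChar R R') (a : R) :
    gaussSum χ (ψ.mulShift a) = χ⁻¹ a * gaussSum χ ψ := by
  rcases eq_or_ne a 0 with rfl | ha
  · simp [gaussSum, MulChar.sum_eq_zero_of_ne_one hχ, MulChar.map_zero]
  · exact gaussSum_mulShift_eq χ ψ (Units.mk0 a ha)

theorem dvd_of_zpow_pow_eq_self {G : Type*} [Group G] {g : G} {q : ℕ}
    (hg : orderOf g = q ^ 2 - 1) (hq : 1 < q) {ℓ : ℤ} (h : (g ^ ℓ) ^ q = g ^ ℓ) :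
    (q + 1 : ℤ) ∣ ℓ := by
  have hcast : ((q ^ 2 - 1 : ℕ) : ℤ) = (q - 1) * (q + 1) := by
    rw [Nat.cast_sub (Nat.one_le_pow _ _ (by omega))]
    push_cast
    ring
  have hdvd : ((q ^ 2 - 1 : ℕ) : ℤ) ∣ (q - 1) * ℓ := by
    rw [← hg, orderOf_dvd_iff_zpow_eq_one, mul_comm, zpow_mul, zpow_sub_one, zpow_natCast, h,
      mul_inv_cancel]
  rw [hcast] at hdvd
  exact (mul_dvd_mul_iff_left (by omega)).mp hdvd

theorem MulChar.ne_one_of_comp_algebraMap {K L R : Type*} [CommRing K] [CommRing L] [Algebra K L]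
    [CommRing R] {χ : MulChar L R} {η : MulChar K R} (hχη : ∀ c, χ (algebraMap K L c) = η c)
    (hη : η ≠ 1) : χ ≠ 1 := by
  rintro rfl
  refine hη (MulChar.ext fun c => ?_)
  rw [← hχη, MulChar.one_apply_coe, MulChar.one_apply (c.isUnit.map _)]

theorem FiniteField.pow_pow_eq_self_of_card_eq_sq {L : Type*} [Field L] [Fintype L] {q : ℕ}
    (hL : Fintype.card L = q ^ 2) (x : L) : (x ^ q) ^ q = x := by
  rw [← pow_mul, ← sq, ← hL, FiniteField.pow_card]

section Extension

variable {K L : Type*} [Field K] [Fintype K] [Field L] [Fintype L] [Algebra K L]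

namespace FiniteField

theorem pow_card_eq_self_iff_mem_range {x : L} :
    x ^ Fintype.card K = x ↔ x ∈ Set.range (algebraMap K L) := by
  refine ⟨fun hx => (IsGalois.mem_range_algebraMap_iff_fixed x).2 fun g => ?_, ?_⟩
  · obtain ⟨⟨i, -⟩, rfl⟩ := (bijective_frobeniusAlgEquivOfAlgebraic_pow K L).2 g
    rw [AlgEquiv.coe_pow]
    exact Function.iterate_fixed hx i
  · rintro ⟨c, rfl⟩
    rw [← map_pow, pow_card]

theorem sum_filter_pow_card_eq_self {M : Type*} [AddCommMonoid M] (f : L → M) :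
    ∑ v ∈ univ.filter (fun v : L => v ^ Fintype.card K = v), f v =
      ∑ c : K, f (algebraMap K L c) := by
  rw [← sum_image fun _ _ _ _ h => (algebraMap K L).injective h]
  congr 1
  ext v
  simp [pow_card_eq_self_iff_mem_range]

section Quadratic

variable (hL : Fintype.card L = Fintype.card K ^ 2)
include hL

theorem finrank_eq_two_of_card_eq_sq : Module.finrank K L = 2 :=
  Nat.pow_right_injective (Fintype.one_lt_card (α := K)) <| by
    simp only [← Module.card_eq_pow_finrank, hL]

theorem sub_pow_card_pow_card_of_card_eq_sq (x : L) :
    (x - x ^ Fintype.card K) ^ Fintype.card K = x ^ Fintype.card K - x := by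
  have := map_sub (frobeniusAlgHom K L) x (x ^ Fintype.card K)
  simp only [coe_frobeniusAlgHom] at this
  rw [this, pow_pow_eq_self_of_card_eq_sq hL]

theorem algebraMap_trace_of_card_eq_sq (x : L) :
    algebraMap K L (Algebra.trace K L x) = x + x ^ Fintype.card K := by
  rw [algebraMap_trace_eq_sum_pow, finrank_eq_two_of_card_eq_sq hL, Finset.sum_range_succ,
    Finset.sum_range_one, Nat.card_eq_fintype_card]
  simp

theorem trace_mul_eq_zero_iff {z : L} (hz0 : z ≠ 0) (hz : z ^ Fintype.card K = -z) (v : L) :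
    Algebra.trace K L (z * v) = 0 ↔ v ^ Fintype.card K = v := by
  rw [← (algebraMap K L).injective.eq_iff, algebraMap_trace_of_card_eq_sq hL, map_zero, mul_pow,
    hz, neg_mul, ← sub_eq_add_neg, ← mul_sub, mul_eq_zero, sub_eq_zero, eq_comm (a := v)]
  exact or_iff_right hz0

/-- `z = b - b^q` satisfies `z^q = -z`, so `Tr(b w) = 0` exactly when `b w / z ∈ K`. -/
theorem sum_filter_trace_mul_eq_zero {M : Type*} [AddCommMonoid M] {b : L}
    (hb : b ^ Fintype.card K ≠ b) (f : L → M) :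
    ∑ w ∈ univ.filter (fun w : L => Algebra.trace K L (b * w) = 0), f w =
      ∑ c : K, f (algebraMap K L c * ((b - b ^ Fintype.card K) / b)) := by
  set z := b - b ^ Fintype.card K
  have hb0 : b ≠ 0 := by
    rintro rfl
    exact hb (zero_pow Fintype.card_ne_zero)
  have hz0 : z ≠ 0 := sub_ne_zero.mpr hb.symm
  have hz : z ^ Fintype.card K = -z := by
    rw [sub_pow_card_pow_card_of_card_eq_sq hL, neg_sub]
  rw [← sum_filter_pow_card_eq_self (fun v => f (v * (z / b))), sum_filter, sum_filter]
  refine (Fintype.sum_bijective (· * (z / b)) (mulRight_bijective₀ _ (div_ne_zero hz0 hb0)) _ _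
    fun v => ?_).symm
  rw [show b * (v * (z / b)) = z * v by field_simp, trace_mul_eq_zero_iff hL hz0 hz]

end Quadratic

end FiniteField

theorem AddChar.compAddMonoidHom_trace_ne_one {ψ : AddChar K ℂ} (hψ : ψ ≠ 1) :
    ψ.compAddMonoidHom (Algebra.trace K L).toAddMonoidHom ≠ 1 := fun h =>
  hψ <| AddChar.compAddMonoidHom_injective_left _ (Algebra.trace_surjective K L) <| h.trans rfl

end Extension

section Reduction

variable {K L : Type*} [Field K] [Fintype K] [Field L] [Algebra K L]
  {R : Type*} [CommRing R] {χ : MulChar L R}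

theorem sum_mulChar_add_mul_mulChar (hχ : ∀ c : K, c ≠ 0 → χ (algebraMap K L c) ^ 2 = 1)
    (b : L) :
    ∑ u : K, χ (algebraMap K L u + b) * χ (algebraMap K L u) =
      ∑ t : K, χ (1 + b * algebraMap K L t) - 1 := by
  calc _ = ∑ u : K, (χ (1 + b * algebraMap K L u⁻¹) - if u = 0 then 1 else 0) := by
        refine sum_congr rfl fun u _ => ?_
        rcases eq_or_ne u 0 with rfl | hu
        · simp [MulChar.map_zero]
        have hu' : algebraMap K L u ≠ 0 := (map_ne_zero _).mpr hu
        rw [if_neg hu, sub_zero, ← one_mul (χ (1 + _)), ← hχ u hu, sq, ← map_mul, ← map_mul,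
          ← map_mul, map_inv₀]
        congr 1
        field_simp
    _ = ∑ u : K, χ (1 + b * algebraMap K L u⁻¹) - 1 := by
        rw [sum_sub_distrib, sum_ite_eq' univ (0 : K)]
        simp
    _ = _ := by
        congr 1
        exact Fintype.sum_bijective _ inv_involutive.bijective _ _ fun _ => rfl

theorem sum_mulChar_one_add_mul_mul_mulChar_sub
    (hχ : ∀ c : K, c ≠ 0 → χ (algebraMap K L c) ^ 2 = 1) {W : L} (hW : W ≠ 0) (s : K) :
    ∑ x : K, χ (1 + W * algebraMap K L x) * χ (algebraMap K L (x - s)) =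
      χ W * (∑ t : K, χ (1 + (algebraMap K L s + W⁻¹) * algebraMap K L t) - 1) := by
  rw [← sum_mulChar_add_mul_mulChar hχ, mul_sum]
  refine (Fintype.sum_bijective _ (Equiv.addRight s).bijective _ _ fun u => ?_).symm
  rw [Equiv.coe_addRight, add_sub_cancel_right, ← mul_assoc, ← map_mul]
  congr 2
  field_simp
  simp only [map_add]
  ring

end Reduction

section LineSum

variable {K L : Type*} [Field K] [Fintype K] [Field L] [Fintype L] [Algebra K L]
  {χ : MulChar L ℂ} {η : MulChar K ℂ} {ψ : AddChar K ℂ}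

theorem gaussSum_inv_mul_sum_one_add_mul (hχ : χ ≠ 1) (hψ : ψ ≠ 1) (b : L) :
    gaussSum χ⁻¹ (ψ.compAddMonoidHom (Algebra.trace K L).toAddMonoidHom) *
        ∑ t : K, χ (1 + b * algebraMap K L t) =
      Fintype.card K * ∑ w ∈ univ.filter (fun w : L => Algebra.trace K L (b * w) = 0),
        χ⁻¹ w * ψ (Algebra.trace K L w) := by
  set ψ' := ψ.compAddMonoidHom (Algebra.trace K L).toAddMonoidHom
  have hsplit (w : L) (t : K) : ψ' ((1 + b * algebraMap K L t) * w) =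
      ψ' w * ψ (t * Algebra.trace K L (b * w)) := by
    rw [add_mul, one_mul, AddChar.map_add_eq_mul, mul_assoc, ← Algebra.smul_def]
    simp [ψ']
  calc _ = ∑ t : K, ∑ w : L, χ⁻¹ w * ψ' ((1 + b * algebraMap K L t) * w) := by
        rw [mul_sum]
        refine sum_congr rfl fun t _ => ?_
        have := gaussSum_mulShift_of_ne_one (inv_ne_one.mpr hχ) ψ' (1 + b * algebraMap K L t)
        rw [inv_inv] at this
        rw [mul_comm, ← this]
        rfl
    _ = ∑ w : L, χ⁻¹ w * ψ' w * ∑ t : K, ψ (t * Algebra.trace K L (b * w)) := by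
        rw [sum_comm]
        simp_rw [hsplit, mul_sum, mul_assoc]
    _ = _ := by
        simp_rw [AddChar.sum_mulShift _ (AddChar.IsPrimitive.of_ne_one hψ), mul_sum, sum_filter]
        refine sum_congr rfl fun w _ => ?_
        split_ifs <;> simp [ψ', mul_comm]

variable (hL : Fintype.card L = Fintype.card K ^ 2)
include hL

theorem gaussSum_inv_mul_sum_one_add_mul_of_pow_card_ne (hχη : ∀ c, χ (algebraMap K L c) = η c)
    (hη : η ≠ 1) (hψ : ψ ≠ 1) {b : L} (hb : b ^ Fintype.card K ≠ b) :
    gaussSum χ⁻¹ (ψ.compAddMonoidHom (Algebra.trace K L).toAddMonoidHom) *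
        ∑ t : K, χ (1 + b * algebraMap K L t) =
      Fintype.card K * (χ (1 - b / b ^ Fintype.card K) * gaussSum η⁻¹ ψ) := by
  rw [gaussSum_inv_mul_sum_one_add_mul (MulChar.ne_one_of_comp_algebraMap hχη hη) hψ,
    FiniteField.sum_filter_trace_mul_eq_zero hL hb]
  set u := (b - b ^ Fintype.card K) / b
  set m := Algebra.trace K L u
  have hterm (c : K) : χ⁻¹ (algebraMap K L c * u) * ψ (Algebra.trace K L (algebraMap K L c * u)) =
      χ⁻¹ u * (η⁻¹ c * ψ (m * c)) := by
    rw [map_mul, ← Algebra.smul_def, map_smul, smul_eq_mul, MulChar.inv_apply' χ, ← map_inv₀,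
      hχη, ← MulChar.inv_apply', mul_comm c]
    ring
  have hgauss := gaussSum_mulShift_of_ne_one (inv_ne_one.mpr hη) ψ m
  rw [inv_inv] at hgauss
  rw [sum_congr rfl fun c _ => hterm c, ← mul_sum]
  change _ * (_ * gaussSum η⁻¹ (ψ.mulShift m)) = _
  have hb0 : b ≠ 0 := by
    rintro rfl
    exact hb (zero_pow Fintype.card_ne_zero)
  have hbq0 : b ^ Fintype.card K ≠ 0 := pow_ne_zero _ hb0
  have hbb : b - b ^ Fintype.card K ≠ 0 := sub_ne_zero.mpr hb.symm
  have hu : u⁻¹ * algebraMap K L m = 1 - b / b ^ Fintype.card K := by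
    simp only [m, u]
    rw [FiniteField.algebraMap_trace_of_card_eq_sq hL, div_pow,
      FiniteField.sub_pow_card_pow_card_of_card_eq_sq hL]
    field_simp
    ring
  rw [hgauss, ← hχη, MulChar.inv_apply', ← mul_assoc (χ u⁻¹), ← map_mul, hu]

theorem card_mul_sum_one_add_mul_of_pow_card_ne (hχη : ∀ c, χ (algebraMap K L c) = η c)
    (hη : η ≠ 1) (hψ : ψ ≠ 1) {b : L} (hb : b ^ Fintype.card K ≠ b) :
    Fintype.card K * ∑ t : K, χ (1 + b * algebraMap K L t) =
      χ (-1) * χ (1 - b / b ^ Fintype.card K) *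
        gaussSum χ (ψ.compAddMonoidHom (Algebra.trace K L).toAddMonoidHom) * gaussSum η⁻¹ ψ := by
  have hprod : gaussSum χ (ψ.compAddMonoidHom (Algebra.trace K L).toAddMonoidHom) *
      gaussSum χ⁻¹ (ψ.compAddMonoidHom (Algebra.trace K L).toAddMonoidHom) =
        χ (-1) * Fintype.card K ^ 2 := by
    rw [← mul_gaussSum_inv_eq_gaussSum χ⁻¹, mul_left_comm,
      gaussSum_mul_gaussSum_eq_card (MulChar.ne_one_of_comp_algebraMap hχη hη)
        (.of_ne_one (AddChar.compAddMonoidHom_trace_ne_one hψ)),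
      MulChar.inv_apply', inv_neg_one, hL]
    push_cast
    ring
  have key := congr_arg (gaussSum χ (ψ.compAddMonoidHom (Algebra.trace K L).toAddMonoidHom) * ·)
    (gaussSum_inv_mul_sum_one_add_mul_of_pow_card_ne hL hχη hη hψ hb)
  simp only [← mul_assoc, hprod] at key
  have hsign : χ (-1) * χ (-1) = 1 := by rw [← map_mul, neg_one_mul, neg_neg, map_one]
  refine mul_left_cancel₀ (Nat.cast_ne_zero.mpr Fintype.card_ne_zero : (Fintype.card K : ℂ) ≠ 0) ?_
  linear_combination
    χ (-1) * key - (Fintype.card K ^ 2 * ∑ t : K, χ (1 + b * algebraMap K L t)) * hsign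

theorem sum_mulChar_one_add_mul_mul_sub_of_pow_card_ne (hχη : ∀ c, χ (algebraMap K L c) = η c)
    (hη : η ≠ 1) (hηq : η.IsQuadratic) (hψ : ψ ≠ 1) {W : L} (hW : W ^ Fintype.card K ≠ W)
    (s : K) :
    ∑ x : K, χ (1 + W * algebraMap K L x) * η (x - s) =
      gaussSum χ (ψ.compAddMonoidHom (Algebra.trace K L).toAddMonoidHom) * gaussSum η ψ /
          Fintype.card K * χ⁻¹ (1 + W ^ Fintype.card K * algebraMap K L s) *
        χ (W ^ Fintype.card K - W) - χ W := by
  have hW0 : W ≠ 0 := by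
    rintro rfl
    exact hW (zero_pow Fintype.card_ne_zero)
  set b := algebraMap K L s + W⁻¹
  have hbq : b ^ Fintype.card K = algebraMap K L s + (W ^ Fintype.card K)⁻¹ := by
    have := map_add (FiniteField.frobeniusAlgHom K L) (algebraMap K L s) W⁻¹
    simp only [FiniteField.coe_frobeniusAlgHom] at this
    rw [this, ← map_pow, FiniteField.pow_card, inv_pow]
  have hb : b ^ Fintype.card K ≠ b := by
    rw [hbq]
    exact fun h => hW (inv_injective (add_left_cancel h))
  have hχsq (c : K) (hc : c ≠ 0) : χ (algebraMap K L c) ^ 2 = 1 := by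
    rw [hχη, ← MulChar.pow_apply' η two_ne_zero, hηq.sq_eq_one,
      MulChar.one_apply (isUnit_iff_ne_zero.mpr hc)]
  have hsum : ∑ t : K, χ (1 + b * algebraMap K L t) = χ (-1) * χ (1 - b / b ^ Fintype.card K) *
      gaussSum χ (ψ.compAddMonoidHom (Algebra.trace K L).toAddMonoidHom) * gaussSum η ψ /
        Fintype.card K := by
    rw [eq_div_iff (Nat.cast_ne_zero.mpr Fintype.card_ne_zero), mul_comm, ← hηq.inv,
      card_mul_sum_one_add_mul_of_pow_card_ne hL hχη hη hψ hb]
  have hA : χ⁻¹ (1 + W ^ Fintype.card K * algebraMap K L s) * χ (W ^ Fintype.card K - W) =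
      χ (-1) * χ W * χ (1 - b / b ^ Fintype.card K) := by
    have hbq0 : b ^ Fintype.card K ≠ 0 := by
      refine pow_ne_zero _ fun h => hb ?_
      rw [h, zero_pow Fintype.card_ne_zero]
    have hbb : b - b ^ Fintype.card K = W⁻¹ - (W ^ Fintype.card K)⁻¹ := by rw [hbq]; ring
    rw [show 1 + W ^ Fintype.card K * algebraMap K L s = W ^ Fintype.card K * b ^ Fintype.card K by
      rw [hbq]; field_simp; ring]
    rw [MulChar.inv_apply', ← map_mul, ← map_mul, ← map_mul]
    congr 1
    field_simp
    rw [← neg_sub b, hbb]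
    field_simp
  simp_rw [← hχη]
  rw [sum_mulChar_one_add_mul_mul_mulChar_sub hχsq hW0, mul_assoc (_ / _), hA, hsum]
  ring

end LineSum

theorem stmt_4_general (q : ℕ) (hqodd : Odd q)
    (F F2 : Type) [Field F] [Fintype F] [Field F2] [Fintype F2] [Algebra F F2]
    (hF : Fintype.card F = q) (hF2 : Fintype.card F2 = q ^ 2)
    (ω : F2ˣ) (hω : ∀ x : F2ˣ, x ∈ Subgroup.zpowers ω)
    (ψ : AddChar F ℂ) (hψ : ∃ a, ψ a ≠ 1)
    (tr : F2 → F) (htr : ∀ x : F2, algebraMap F F2 (tr x) = x + x ^ q)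
    (χ : MulChar F2 ℂ)
    (hχη : ∀ x : F, x ≠ 0 → χ (algebraMap F F2 x) = quadChar F x)
    (ℓ : ℤ) (hℓ : ¬ ((q : ℤ) + 1 ∣ ℓ)) :
    ∀ s : F,
      ∑ x ∈ Finset.univ.erase s,
          χ (1 + ((ω ^ ℓ : F2ˣ) : F2) * algebraMap F F2 x) * quadChar F (x - s) =
        ((∑ y : F2, χ y * ψ (tr y)) * (∑ x : F, quadChar F x * ψ x) / q) *
            χ⁻¹ (1 + ((ω ^ ((q : ℤ) * ℓ) : F2ˣ) : F2) * algebraMap F F2 s) *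
            χ (((ω ^ (ℓ * (q : ℤ)) : F2ˣ) : F2) - ((ω ^ ℓ : F2ˣ) : F2)) -
          χ ((ω ^ ℓ : F2ˣ) : F2) := by
  intro s
  subst hF
  obtain rfl : tr = Algebra.trace F F2 := funext fun x => (algebraMap F F2).injective <| by
    rw [htr, FiniteField.algebraMap_trace_of_card_eq_sq hF2]
  set η := (quadraticChar F).ringHomComp (Int.castRingHom ℂ)
  have hquad (x : F) : quadChar F x = η x := quadChar_eq_quadraticChar F x
  have hχη' (c : F) : χ (algebraMap F F2 c) = η c := by
    rcases eq_or_ne c 0 with rfl | hc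
    · simp [MulChar.map_zero]
    · rw [hχη c hc, hquad]
  have hη : η ≠ 1 := (MulChar.ringHomComp_ne_one_iff Int.cast_injective).mpr <|
    quadraticChar_ne_one <| by
      rw [Ne, FiniteField.even_card_iff_char_two, Nat.odd_iff.mp hqodd]
      exact one_ne_zero
  have hW : ((ω ^ ℓ : F2ˣ) : F2) ^ Fintype.card F ≠ ((ω ^ ℓ : F2ˣ) : F2) := by
    refine fun h => hℓ <| dvd_of_zpow_pow_eq_self (g := ω) ?_ Fintype.one_lt_card <|
      Units.ext <| by rw [Units.val_pow_eq_pow_val, h]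
    rw [orderOf_eq_card_of_forall_mem_zpowers hω, Nat.card_units, Nat.card_eq_fintype_card, hF2]
  have hWq : ((ω ^ (ℓ * Fintype.card F : ℤ) : F2ˣ) : F2) =
      ((ω ^ ℓ : F2ˣ) : F2) ^ Fintype.card F := by
    rw [zpow_mul, zpow_natCast, Units.val_pow_eq_pow_val]
  rw [mul_comm _ ℓ, hWq, Finset.sum_erase _ (by simp [quadChar])]
  simp_rw [hquad]
  exact sum_mulChar_one_add_mul_mul_sub_of_pow_card_ne hF2 hχη' hη
    ((quadraticChar_isQuadratic F).comp _) (AddChar.ne_one_iff.mpr hψ) hW s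

/-- evaluation of `∑_{x∈F_q, x≠s} χ(1 + ω^ℓ x)·η(x − s)`
(Lemma 3.2 of the paper). -/
theorem stmt_4 (q : ℕ) (hq : IsPrimePow q) (hqodd : Odd q)
    (F F2 : Type) [Field F] [Fintype F] [Field F2] [Fintype F2] [Algebra F F2]
    (hF : Fintype.card F = q) (hF2 : Fintype.card F2 = q ^ 2)
    (ω : F2ˣ) (hω : ∀ x : F2ˣ, x ∈ Subgroup.zpowers ω)
    (ψ : AddChar F ℂ) (hψ : ∃ a, ψ a ≠ 1)
    (tr : F2 → F) (htr : ∀ x : F2, algebraMap F F2 (tr x) = x + x ^ q)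
    (χ : MulChar F2 ℂ)
    (hχη : ∀ x : F, x ≠ 0 → χ (algebraMap F F2 x) = quadChar F x)
    (ℓ : ℤ) (hℓ : ¬ ((q : ℤ) + 1 ∣ ℓ)) :
    ∀ s : F,
      ∑ x ∈ Finset.univ.erase s,
          χ (1 + ((ω ^ ℓ : F2ˣ) : F2) * algebraMap F F2 x) * quadChar F (x - s) =
        ((∑ y : F2, χ y * ψ (tr y)) * (∑ x : F, quadChar F x * ψ x) / q) *
            χ⁻¹ (1 + ((ω ^ ((q : ℤ) * ℓ) : F2ˣ) : F2) * algebraMap F F2 s) *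
            χ (((ω ^ (ℓ * (q : ℤ)) : F2ˣ) : F2) - ((ω ^ ℓ : F2ˣ) : F2)) -
          χ ((ω ^ ℓ : F2ˣ) : F2) :=
  stmt_4_general q hqodd F F2 hF hF2 ω hω ψ hψ tr htr χ hχη ℓ hℓ
end
end

section
/- Let q be an odd prime power, e an even divisor of q²−1, and χ_e a multiplicative character of F_{q²} with χ_e(ω) = ζ_e := exp(2πi/e) whose restriction to F_q^× equals the quadratic character η of F_q. Let ℓ be an integer not divisible by q+1, and let H be a subset of {0,1,…,e−1} of size e/2 containing exactly one element of each residue class modulo e/2. Then, as an identity in ℂ, |D_{ℓ,H}| = q/2 + χ_e(−1)·G_q(η)/(2q) + (χ_e(−1)·G_q(η)/q) · ∑_{j∈H} ψ'(ω^{qℓ}·(ω^{ℓq} − ω^{ℓ})^{−1}·C_j^{(e,q²)}). -/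
noncomputable section

open Complex

open scoped Classical

/-- The `i`-th cyclotomic class `C_i^{(e,q²)} = ω^i ⟨ω^e⟩` of order `e`. -/
def cyc {F2 : Type*} [Field F2] (ω : F2ˣ) (e : ℕ) (i : ℤ) : Set F2 :=
  {x | ∃ k : ℤ, x = ((ω ^ (i + (e : ℤ) * k) : F2ˣ) : F2)}

/-!
Membership in a cyclotomic class is read off from `χ`: `z ∈ C_i ↔ χ z = ζ_e ^ i`. Let `G` be `1` on
`⋃_{j ∈ H} C_j`, `-1` on the other nonzero elements and `0` at `0`, so that
`|D_{ℓ,H}| = q/2 + (1/2) ∑_{x ∈ F_q} G(1 + x ω^ℓ)`.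

With `B = ω^ℓ ∉ F_q` and `d = B^q/(B^q - B)`, the points `1 + xB` are exactly the `z` with
`Tr(dz) = 1`. Detecting this condition with `ψ` turns the sum into
`(1/q) ∑_u ψ(-u) ∑_z G(z) ψ(u Tr(dz))`. The condition on `H` says that multiplication by
`ω^{e/2}`, on which `χ` is `-1`, swaps the two halves; with `χ = η` on `F_q^×` this gives
`G(uz) = η(u) G(z)` and `∑_z G(z) = 0`. Hence the inner sum is `η(u)` times its value at `u = 1`,
and the outer sum becomes the Gauss sum `η(-1) G_q(η)`. Finally
`∑_z G(z) ψ'(dz) = 1 + 2 ∑_{j ∈ H} ψ'(d C_j)`, because `ψ'(d ·)` sums to `-1` over `F_{q²}^×`.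
-/

open Finset

theorem FiniteField.exists_algebraMap_eq_of_pow_card_eq {K L : Type*} [Field K] [Fintype K]
    [Field L] [Algebra K L] {z : L} (hz : z ^ Fintype.card K = z) :
    ∃ u : K, algebraMap K L u = z := by
  open Polynomial in
  have hroots : Multiset.card (X ^ Fintype.card K - X : K[X]).roots =
      (X ^ Fintype.card K - X : K[X]).natDegree := by
    rw [FiniteField.roots_X_pow_card_sub_X, FiniteField.X_pow_card_sub_X_natDegree_eq K
      Fintype.one_lt_card, Finset.card_val, Finset.card_univ]
  have hz' : z ∈ ((X ^ Fintype.card K - X : K[X]).map (algebraMap K L)).roots := by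
    rw [Polynomial.map_sub, Polynomial.map_pow, Polynomial.map_X,
      mem_roots (FiniteField.X_pow_card_sub_X_ne_zero L Fintype.one_lt_card)]
    simp [hz]
  rw [← roots_map_of_injective_of_card_eq_natDegree (algebraMap K L).injective hroots,
    Multiset.mem_map] at hz'
  obtain ⟨u, -, hu⟩ := hz'
  exact ⟨u, hu⟩

theorem AddChar.sum_filter_eq_of_ne_one {F M : Type*} [Field F] [Fintype F] [Fintype M]
    {ψ : AddChar F ℂ} (hψ : ψ ≠ 1) (T : M → F) (c : F) (f : M → ℂ) :
    ∑ z ∈ univ.filter (fun z => T z = c), f z =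
      (∑ u, ψ (-(u * c)) * ∑ z, f z * ψ (u * T z)) / Fintype.card F := by
  have horth (z : M) : ∑ u, ψ (-(u * c)) * ψ (u * T z) =
      if T z = c then (Fintype.card F : ℂ) else 0 := by
    simp_rw [← AddChar.map_add_eq_mul, show ∀ u, -(u * c) + u * T z = u * (T z - c) from
      fun u => by ring]
    rw [AddChar.sum_mulShift _ (AddChar.IsPrimitive.of_ne_one hψ)]
    split_ifs <;> simp_all [sub_eq_zero]
  rw [eq_div_iff (by exact_mod_cast Fintype.card_ne_zero), sum_filter, sum_mul]
  simp_rw [mul_sum]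
  rw [sum_comm]
  refine sum_congr rfl fun z _ => ?_
  simp_rw [mul_left_comm _ (f z), ← mul_sum, horth]
  split_ifs <;> simp

theorem AddChar.sum_comp_eq_zero {F M : Type*} [Field F] [AddCommGroup M] [Fintype M]
    {ψ : AddChar F ℂ} (hψ : ψ ≠ 1) (T : M →+ F) (hT : Function.Surjective T) :
    ∑ z, ψ (T z) = 0 := by
  obtain ⟨a, ha⟩ := AddChar.ne_one_iff.mp hψ
  obtain ⟨b, rfl⟩ := hT a
  exact AddChar.sum_eq_zero_of_ne_one (ψ := ψ.compAddMonoidHom T) (AddChar.ne_one_iff.mpr ⟨b, ha⟩)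

theorem sum_mul_addChar_mul_eq_mul_sum {F L : Type*} [Field F] [Ring L] [Fintype L] [Algebra F L]
    (ψ : AddChar F ℂ) (T : L →ₗ[F] F) {G : L → ℂ} {κ : F → ℂ} {u : F} (hu : u ≠ 0)
    (hκ : κ u * κ u = 1) (hG : ∀ z, G (algebraMap F L u * z) = κ u * G z) :
    ∑ z, G z * ψ (u * T z) = κ u * ∑ z, G z * ψ (T z) := by
  have hT (z : L) : T (algebraMap F L u * z) = u * T z := by
    rw [← Algebra.smul_def, map_smul, smul_eq_mul]
  have hreindex : ∑ z, G z * ψ (T z) = κ u * ∑ z, G z * ψ (u * T z) := by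
    rw [← Fintype.sum_equiv (Units.mulLeft ((Units.mk0 u hu).map (algebraMap F L).toMonoidHom))
      (fun z => G (algebraMap F L u * z) * ψ (T (algebraMap F L u * z))) _ fun z => rfl, mul_sum]
    simp_rw [hG, hT, mul_assoc]
  rw [hreindex, ← mul_assoc, hκ, one_mul]

theorem sum_filter_eq_one_of_homogeneous {F L : Type*} [Field F] [Fintype F] [Ring L] [Fintype L]
    [Algebra F L] {ψ : AddChar F ℂ} (hψ : ψ ≠ 1) (T : L →ₗ[F] F) {G : L → ℂ} {κ : F → ℂ}
    (hκ0 : κ 0 = 0) (hκ : ∀ u ≠ 0, κ u * κ u = 1)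
    (hG : ∀ u ≠ 0, ∀ z, G (algebraMap F L u * z) = κ u * G z) (hG0 : ∑ z, G z = 0) :
    ∑ z ∈ univ.filter (fun z => T z = 1), G z =
      (∑ u, κ u * ψ (-u)) * (∑ z, G z * ψ (T z)) / Fintype.card F := by
  have hS (u : F) : ∑ z, G z * ψ (u * T z) = κ u * ∑ z, G z * ψ (T z) := by
    rcases eq_or_ne u 0 with rfl | hu
    · simp [hκ0, hG0]
    · exact sum_mul_addChar_mul_eq_mul_sum ψ T hu (hκ u hu) (hG u hu)
  rw [AddChar.sum_filter_eq_of_ne_one hψ T 1 G, sum_mul]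
  simp_rw [mul_one, hS]
  exact congrArg (· / _) (sum_congr rfl fun u _ => by ring)

theorem MulChar.sum_algebraMap_mul_addChar_neg {F L : Type*} [Field F] [Fintype F] [CommRing L]
    [Algebra F L] (χ : MulChar L ℂ) (ψ : AddChar F ℂ) :
    ∑ u, χ (algebraMap F L u) * ψ (-u) = χ (-1) * ∑ u, χ (algebraMap F L u) * ψ u := by
  rw [mul_sum]
  refine Fintype.sum_equiv (Equiv.neg F) _ _ fun u => ?_
  rw [Equiv.neg_apply, ← mul_assoc, ← map_mul, map_neg (algebraMap F L), neg_one_mul, neg_neg]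

theorem Finset.card_filter_eq_half {α : Type*} [Fintype α] (p : α → Prop) [DecidablePred p] :
    (#(univ.filter p) : ℂ) = (Fintype.card α + ∑ a, if p a then (1 : ℂ) else -1) / 2 := by
  rw [sum_ite, sum_const, sum_const, ← card_univ,
    ← card_filter_add_card_filter_not (s := univ) p]
  simp only [nsmul_eq_mul]
  push_cast
  ring

section SplitSign

variable {L : Type*} [Field L]

def splitSign (χ : MulChar L ℂ) (V : Finset ℂ) (z : L) : ℂ :=
  if z = 0 then 0 else if χ z ∈ V then 1 else -1

variable {χ : MulChar L ℂ} {V : Finset ℂ}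

theorem splitSign_mul (hV : ∀ z ≠ 0, -χ z ∈ V ↔ χ z ∉ V) {c : L} (hc : χ c = 1 ∨ χ c = -1)
    (z : L) : splitSign χ V (c * z) = χ c * splitSign χ V z := by
  have hc0 : c ≠ 0 := by
    rintro rfl
    rw [MulChar.map_zero] at hc
    norm_num at hc
  rcases eq_or_ne z 0 with rfl | hz
  · simp [splitSign]
  rcases hc with hc | hc
  · simp [splitSign, hc0, hz, hc]
  · simp only [splitSign, mul_eq_zero, hc0, hz, or_self, if_false, map_mul, hc, neg_one_mul,
      hV z hz]
    split_ifs <;> norm_num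

theorem sum_splitSign_eq_zero [Fintype L] (hV : ∀ z ≠ 0, -χ z ∈ V ↔ χ z ∉ V) {a : L}
    (ha : χ a = -1) : ∑ z, splitSign χ V z = 0 := by
  have ha0 : a ≠ 0 := by
    rintro rfl
    rw [MulChar.map_zero] at ha
    norm_num at ha
  have h := Fintype.sum_equiv (Equiv.mulLeft₀ a ha0) (fun z => splitSign χ V (a * z))
    (splitSign χ V) fun z => rfl
  simp_rw [splitSign_mul hV (Or.inr ha), ← mul_sum, ha, neg_one_mul] at h
  linear_combination -h / 2

theorem sum_splitSign_mul [Fintype L] (hV0 : 0 ∉ V) (f : L → ℂ) :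
    ∑ z, splitSign χ V z * f z =
      2 * ∑ z ∈ univ.filter (fun z => χ z ∈ V), f z - ∑ z, f z + f 0 := by
  have hpt (z : L) : splitSign χ V z * f z =
      2 * (if χ z ∈ V then f z else 0) - f z + (if z = 0 then f z else 0) := by
    rcases eq_or_ne z 0 with rfl | hz
    · simp [splitSign, MulChar.map_zero, hV0]
    · simp only [splitSign, if_neg hz]
      split_ifs <;> ring
  simp_rw [hpt, sum_add_distrib, sum_sub_distrib, ← mul_sum, sum_ite_eq', mem_univ, if_true,
    sum_filter]

end SplitSign

section QuadraticExtension

variable {F L : Type*} [Field F] [Fintype F] [Field L] [Algebra F L] {tr : L → F}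
  (htr : ∀ z, algebraMap F L (tr z) = z + z ^ Fintype.card F)
include htr

theorem isLinearMap_of_algebraMap_eq_add_pow_card : IsLinearMap F tr where
  map_add z w := (algebraMap F L).injective <| by
    have h := map_add (FiniteField.frobeniusAlgHom F L) z w
    simp only [FiniteField.frobeniusAlgHom_apply] at h
    rw [map_add, htr, htr, htr, h]
    ring
  map_smul u z := (algebraMap F L).injective <| by
    have h := map_smul (FiniteField.frobeniusAlgHom F L) u z
    simp only [FiniteField.frobeniusAlgHom_apply] at h
    rw [smul_eq_mul, map_mul, htr, htr, h, Algebra.smul_def, Algebra.smul_def]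
    ring

variable {B : L} (hB : (B ^ Fintype.card F) ^ Fintype.card F = B) (hBq : B ^ Fintype.card F ≠ B)
include hB hBq

/-- `d = B^q / (B^q - B)` is the element with `Tr(d) = 1` and `Tr(dB) = 0`. -/
theorem trace_mul_eq_one_iff (z : L) :
    tr (B ^ Fintype.card F * (B ^ Fintype.card F - B)⁻¹ * z) = 1 ↔
      ∃ x : F, 1 + algebraMap F L x * B = z := by
  set q := Fintype.card F
  have hfrob_add (x y : L) : (x + y) ^ q = x ^ q + y ^ q := by
    simpa using map_add (FiniteField.frobeniusAlgHom F L) x y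
  have hfrob_sub (x y : L) : (x - y) ^ q = x ^ q - y ^ q := by
    simpa using map_sub (FiniteField.frobeniusAlgHom F L) x y
  have hfrob_alg (x : F) : algebraMap F L x ^ q = algebraMap F L x := by
    rw [← map_pow, FiniteField.pow_card]
  have hAB : B ^ q - B ≠ 0 := sub_ne_zero.mpr hBq
  have hB0 : B ≠ 0 := fun h0 => hBq (by rw [h0, zero_pow Fintype.card_ne_zero])
  have htrace (w : L) : algebraMap F L (tr (B ^ q * (B ^ q - B)⁻¹ * w)) =
      (B ^ q * w - B * w ^ q) / (B ^ q - B) := by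
    rw [htr, mul_pow, mul_pow, inv_pow, hfrob_sub, hB]
    field_simp [hAB, (sub_ne_zero.mpr hBq.symm : B - B ^ q ≠ 0)]
    ring
  rw [← (algebraMap F L).injective.eq_iff, htrace, map_one, div_eq_one_iff_eq hAB]
  constructor
  · intro hz
    have hfix : ((z - 1) * B⁻¹) ^ q = (z - 1) * B⁻¹ := by
      rw [mul_pow, hfrob_sub, one_pow, inv_pow]
      field_simp
      linear_combination -hz
    obtain ⟨x, hx⟩ := FiniteField.exists_algebraMap_eq_of_pow_card_eq hfix
    exact ⟨x, by rw [hx]; field_simp; ring⟩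
  · rintro ⟨x, rfl⟩
    rw [hfrob_add, one_pow, mul_pow, hfrob_alg]
    ring

theorem sum_line_eq_sum_filter [Fintype L] (f : L → ℂ) :
    ∑ x : F, f (1 + algebraMap F L x * B) =
      ∑ z ∈ univ.filter (fun z => tr (B ^ Fintype.card F * (B ^ Fintype.card F - B)⁻¹ * z) = 1),
        f z := by
  have hB0 : B ≠ 0 := fun h0 => hBq (by rw [h0, zero_pow Fintype.card_ne_zero])
  have hline : univ.filter (fun z => tr (B ^ Fintype.card F * (B ^ Fintype.card F - B)⁻¹ * z) = 1)
      = univ.image (fun x : F => 1 + algebraMap F L x * B) := by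
    ext z
    simp [trace_mul_eq_one_iff htr hB hBq]
  rw [hline, sum_image fun x _ y _ hxy => (algebraMap F L).injective
    (mul_right_cancel₀ hB0 (add_left_cancel hxy))]

end QuadraticExtension

theorem quadChar_eq_one_or_eq_neg_one {F : Type*} [Field F] {x : F} (hx : x ≠ 0) :
    quadChar F x = 1 ∨ quadChar F x = -1 := by
  unfold quadChar
  rw [if_neg hx]
  split_ifs <;> simp

theorem card_filter_apply_one_add_mul_mem_eq {F L : Type*} [Field F] [Fintype F] [Field L]
    [Fintype L] [Algebra F L] {ψ : AddChar F ℂ} (hψ : ψ ≠ 1) {tr : L → F}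
    (htr : ∀ z, algebraMap F L (tr z) = z + z ^ Fintype.card F) {B : L}
    (hB : (B ^ Fintype.card F) ^ Fintype.card F = B) (hBq : B ^ Fintype.card F ≠ B)
    {χ : MulChar L ℂ} (hχη : ∀ x : F, x ≠ 0 → χ (algebraMap F L x) = quadChar F x)
    {V : Finset ℂ} (hV0 : 0 ∉ V) (hV : ∀ z ≠ 0, -χ z ∈ V ↔ χ z ∉ V) {a : L} (ha : χ a = -1) :
    (#(univ.filter fun x : F => χ (1 + algebraMap F L x * B) ∈ V) : ℂ) =
      Fintype.card F / 2 + χ (-1) * (∑ x : F, quadChar F x * ψ x) / (2 * Fintype.card F) +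
        χ (-1) * (∑ x : F, quadChar F x * ψ x) / Fintype.card F *
          ∑ z ∈ univ.filter (fun z => χ z ∈ V),
            ψ (tr (B ^ Fintype.card F * (B ^ Fintype.card F - B)⁻¹ * z)) := by
  set d := B ^ Fintype.card F * (B ^ Fintype.card F - B)⁻¹
  set T : L →ₗ[F] F :=
    (isLinearMap_of_algebraMap_eq_add_pow_card htr).mk'.comp (LinearMap.mulLeft F d)
  have hT (z : L) : T z = tr (d * z) := rfl
  have hline (x : F) : T (1 + algebraMap F L x * B) = 1 :=
    (trace_mul_eq_one_iff htr hB hBq _).mpr ⟨x, rfl⟩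
  have hT1 : T 1 = 1 := by simpa using hline 0
  have hT_surj : Function.Surjective T := fun u => ⟨algebraMap F L u, by
    rw [← mul_one (algebraMap F L u), ← Algebra.smul_def, map_smul, hT1, smul_eq_mul, mul_one]⟩
  have hκ (u : F) : χ (algebraMap F L u) = quadChar F u := by
    rcases eq_or_ne u 0 with rfl | hu
    · simp [quadChar, MulChar.map_zero]
    · exact hχη u hu
  have hsign (x : F) : splitSign χ V (1 + algebraMap F L x * B) =
      if χ (1 + algebraMap F L x * B) ∈ V then 1 else -1 := by
    refine if_neg fun h0 => ?_
    simpa [h0] using hline x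
  have hfourier := sum_filter_eq_one_of_homogeneous hψ T (G := splitSign χ V)
    (κ := fun u => χ (algebraMap F L u)) (by simp [MulChar.map_zero])
    (fun u hu => by rcases quadChar_eq_one_or_eq_neg_one hu with h | h <;> simp [hκ, h])
    (fun u hu => splitSign_mul hV (hκ u ▸ quadChar_eq_one_or_eq_neg_one hu))
    (sum_splitSign_eq_zero hV ha)
  have hgauss : ∑ u, χ (algebraMap F L u) * ψ (-u) = χ (-1) * ∑ x : F, quadChar F x * ψ x := by
    simp_rw [MulChar.sum_algebraMap_mul_addChar_neg, hκ]
  have hsigns : ∑ z, splitSign χ V z * ψ (T z) =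
      2 * ∑ z ∈ univ.filter (fun z => χ z ∈ V), ψ (T z) + 1 := by
    have hψT : ∑ z, ψ (T z) = 0 := AddChar.sum_comp_eq_zero hψ T.toAddMonoidHom hT_surj
    rw [sum_splitSign_mul hV0, hψT, map_zero, AddChar.map_zero_eq_one]
    ring
  simp only [hT] at hfourier hsigns
  rw [card_filter_eq_half, ← sum_congr rfl fun x _ => hsign x, sum_line_eq_sum_filter htr hB hBq,
    hfourier, hgauss, hsigns]
  have hq : (Fintype.card F : ℂ) ≠ 0 := by exact_mod_cast Fintype.card_ne_zero
  field_simp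
  ring

theorem IsPrimitiveRoot.zpow_eq_zpow_iff_modEq {K : Type*} [Field K] {ζ : K} {n : ℕ}
    (h : IsPrimitiveRoot ζ n) (hn : n ≠ 0) {a b : ℤ} : ζ ^ a = ζ ^ b ↔ a ≡ b [ZMOD n] := by
  have hζ : ζ ≠ 0 := h.ne_zero hn
  rw [Int.modEq_iff_dvd, ← h.zpow_eq_one_iff_dvd, zpow_sub₀ hζ,
    div_eq_one_iff_eq (zpow_ne_zero _ hζ), eq_comm]

theorem IsPrimitiveRoot.pow_eq_neg_one_of_add_self {K : Type*} [CommRing K] [IsDomain K]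
    {ζ : K} {m : ℕ} (hm : 0 < m) (hζ : IsPrimitiveRoot ζ (m + m)) : ζ ^ m = -1 := by
  have := hζ.pow_of_dvd hm.ne' ⟨2, by ring⟩
  rw [← two_mul, Nat.mul_div_cancel _ hm] at this
  exact this.eq_neg_one_of_two_right

theorem MulChar.apply_coe_zpow {R : Type*} [CommMonoid R] (χ : MulChar R ℂ) (u : Rˣ) (n : ℤ) :
    χ ↑(u ^ n) = χ ↑u ^ n := by
  rw [← χ.coe_toUnitHom, map_zpow, Units.val_zpow_eq_zpow_val, χ.coe_toUnitHom]

section HalfSystem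

variable {m : ℕ} (hm : 0 < m) {H : Finset ℕ} (hH : ∀ r < m, ∃! j, j ∈ H ∧ j % m = r)
include hm hH

theorem eq_of_mem_of_modEq {j j' : ℕ} (hj : j ∈ H) (hj' : j' ∈ H) (h : j ≡ j' [MOD m]) :
    j = j' :=
  (hH (j' % m) (Nat.mod_lt _ hm)).unique ⟨hj, h⟩ ⟨hj', rfl⟩

theorem exists_modEq_add_iff_not_exists_modEq (k : ℤ) :
    (∃ j ∈ H, (j : ℤ) ≡ k + m [ZMOD (m + m : ℕ)]) ↔ ¬∃ j ∈ H, (j : ℤ) ≡ k [ZMOD (m + m : ℕ)] := by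
  constructor
  · rintro ⟨j, hj, hjk⟩ ⟨j', hj', hj'k⟩
    obtain ⟨a, ha⟩ := hjk.dvd
    obtain ⟨b, hb⟩ := hj'k.dvd
    push_cast at ha hb
    have hmod : (j : ℤ) ≡ j' [ZMOD m] :=
      Int.modEq_iff_dvd.mpr ⟨2 * (a - b) - 1, by linear_combination ha - hb⟩
    obtain rfl := eq_of_mem_of_modEq hm hH hj hj' (Int.natCast_modEq_iff.mp hmod)
    have : (m : ℤ) * (2 * (a - b) - 1) = 0 := by linear_combination hb - ha
    rcases mul_eq_zero.mp this with h | h <;> omega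
  · intro hnot
    have hk0 := Int.emod_nonneg k (by omega : (m : ℤ) ≠ 0)
    have hkm := Int.emod_lt_of_pos k (by omega : (0 : ℤ) < m)
    obtain ⟨j, ⟨hj, hjr⟩, -⟩ := hH (k % m).toNat (by omega)
    have hjk : (j : ℤ) ≡ k [ZMOD m] := by
      have := congrArg (Nat.cast : ℕ → ℤ) hjr
      push_cast [Int.toNat_of_nonneg hk0] at this
      exact this
    obtain ⟨t, ht⟩ := hjk.dvd
    rcases Int.even_or_odd' t with ⟨s, rfl | rfl⟩
    · exact absurd ⟨j, hj, Int.modEq_iff_dvd.mpr ⟨s, by push_cast; linear_combination ht⟩⟩ hnot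
    · exact ⟨j, hj, Int.modEq_iff_dvd.mpr ⟨s + 1, by push_cast; linear_combination ht⟩⟩

variable {K : Type*} [Field K] {ζ : K} (hζ : IsPrimitiveRoot ζ (m + m))
include hζ

theorem neg_zpow_mem_image_iff (k : ℤ) :
    -ζ ^ k ∈ H.image (ζ ^ ·) ↔ ζ ^ k ∉ H.image (ζ ^ ·) := by
  have hmem (a : ℤ) : ζ ^ a ∈ H.image (ζ ^ ·) ↔ ∃ j ∈ H, (j : ℤ) ≡ a [ZMOD (m + m : ℕ)] := by
    simp only [mem_image, ← zpow_natCast, hζ.zpow_eq_zpow_iff_modEq (by omega)]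
  rw [← neg_one_mul, ← hζ.pow_eq_neg_one_of_add_self hm, ← zpow_natCast,
    ← zpow_add₀ (hζ.ne_zero (by omega)), add_comm, hmem, hmem]
  exact exists_modEq_add_iff_not_exists_modEq hm hH k

theorem injOn_pow_of_existsUnique_mod : Set.InjOn (ζ ^ ·) H := by
  intro j hj j' hj' h
  dsimp only at h
  rw [← zpow_natCast, ← zpow_natCast, hζ.zpow_eq_zpow_iff_modEq (by omega),
    Int.natCast_modEq_iff] at h
  exact eq_of_mem_of_modEq hm hH hj hj' (h.of_dvd ⟨2, by ring⟩)

end HalfSystem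

section CyclotomicClasses

variable {L : Type*} [Field L] {ω : Lˣ} (hω : ∀ x : Lˣ, x ∈ Subgroup.zpowers ω)
  {χ : MulChar L ℂ}
include hω

theorem exists_zpow_eq_of_ne_zero {z : L} (hz : z ≠ 0) : ∃ n : ℤ, z = ↑(ω ^ n) := by
  obtain ⟨n, hn⟩ := Subgroup.mem_zpowers_iff.mp (hω (Units.mk0 z hz))
  exact ⟨n, by rw [hn, Units.val_mk0]⟩

theorem mem_cyc_iff {e : ℕ} (he : e ≠ 0) (hζ : IsPrimitiveRoot (χ ω) e) (z : L) (i : ℤ) :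
    z ∈ cyc ω e i ↔ χ z = χ ω ^ i := by
  have hζ0 : χ ω ≠ 0 := hζ.ne_zero he
  constructor
  · rintro ⟨k, rfl⟩
    rw [MulChar.apply_coe_zpow, zpow_add₀ hζ0, zpow_mul, zpow_natCast, hζ.pow_eq_one, one_zpow,
      mul_one]
  · intro hz
    have hz0 : z ≠ 0 := by
      rintro rfl
      rw [MulChar.map_zero] at hz
      exact zpow_ne_zero _ hζ0 hz.symm
    obtain ⟨n, rfl⟩ := exists_zpow_eq_of_ne_zero hω hz0
    rw [MulChar.apply_coe_zpow, hζ.zpow_eq_zpow_iff_modEq he] at hz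
    obtain ⟨k, hk⟩ := hz.symm.dvd
    exact ⟨k, by rw [show n = i + e * k by linarith]⟩

theorem exists_mem_cyc_iff {e : ℕ} (he : e ≠ 0) (hζ : IsPrimitiveRoot (χ ω) e) (H : Finset ℕ)
    (z : L) : (∃ i ∈ H, z ∈ cyc ω e i) ↔ χ z ∈ H.image (χ ω ^ ·) := by
  simp [mem_cyc_iff hω he hζ, eq_comm]

theorem sum_finsum_mem_cyc_eq_sum [Fintype L] {m : ℕ} (hm : 0 < m)
    (hζ : IsPrimitiveRoot (χ ω) (m + m)) {H : Finset ℕ} (hH : ∀ r < m, ∃! j, j ∈ H ∧ j % m = r)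
    (f : L → ℂ) :
    ∑ j ∈ H, ∑ᶠ y ∈ cyc ω (m + m) j, f y =
      ∑ z ∈ univ.filter (fun z => χ z ∈ H.image (χ ω ^ ·)), f z := by
  have hcyc (j : ℕ) : cyc ω (m + m) j = ↑(univ.filter fun z => χ z = χ ω ^ j) := by
    ext z
    simp [mem_cyc_iff hω (by omega) hζ]
  simp_rw [hcyc, finsum_mem_coe_finset]
  rw [← sum_fiberwise_eq_sum_filter, sum_image (injOn_pow_of_existsUnique_mod hm hH hζ)]

theorem neg_apply_mem_image_iff {m : ℕ} (hm : 0 < m) (hζ : IsPrimitiveRoot (χ ω) (m + m))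
    {H : Finset ℕ} (hH : ∀ r < m, ∃! j, j ∈ H ∧ j % m = r) {z : L} (hz : z ≠ 0) :
    -χ z ∈ H.image (χ ω ^ ·) ↔ χ z ∉ H.image (χ ω ^ ·) := by
  obtain ⟨n, rfl⟩ := exists_zpow_eq_of_ne_zero hω hz
  rw [MulChar.apply_coe_zpow]
  exact neg_zpow_mem_image_iff hm hH hζ n

theorem coe_zpow_pow_ne_self [Fintype L] {q : ℕ} (hL : Fintype.card L = q ^ 2) {ℓ : ℤ}
    (hℓ : ¬((q : ℤ) + 1 ∣ ℓ)) : ((ω ^ ℓ : Lˣ) : L) ^ q ≠ ↑(ω ^ ℓ) := by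
  intro h
  have hq : 1 < q := by
    have := Fintype.one_lt_card (α := L)
    by_contra! hq
    interval_cases q <;> simp_all
  have hord : (orderOf ω : ℤ) = ((q : ℤ) - 1) * ((q : ℤ) + 1) := by
    rw [orderOf_eq_card_of_forall_mem_zpowers hω, Nat.card_eq_fintype_card, Fintype.card_units, hL,
      Nat.cast_sub (Nat.one_le_pow _ _ (by omega))]
    push_cast
    ring
  have hpow : ω ^ (ℓ * q) = ω ^ ℓ :=
    Units.ext (by rw [zpow_mul, zpow_natCast, Units.val_pow_eq_pow_val, h])
  have hone : ω ^ (((q : ℤ) - 1) * ℓ) = 1 := by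
    rw [sub_mul, one_mul, mul_comm, zpow_sub, hpow, mul_inv_cancel]
  rw [← orderOf_dvd_iff_zpow_eq_one, hord] at hone
  exact hℓ ((mul_dvd_mul_iff_left (by omega : (q : ℤ) - 1 ≠ 0)).mp hone)

end CyclotomicClasses

theorem stmt_6_general (q e : ℕ) (he : e ∣ q ^ 2 - 1) (heven : Even e)
    (F F2 : Type) [Field F] [Fintype F] [Field F2] [Fintype F2] [Algebra F F2]
    (hF : Fintype.card F = q) (hF2 : Fintype.card F2 = q ^ 2)
    (ω : F2ˣ) (hω : ∀ x : F2ˣ, x ∈ Subgroup.zpowers ω)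
    (ψ : AddChar F ℂ) (hψ : ∃ a, ψ a ≠ 1)
    (tr : F2 → F) (htr : ∀ x : F2, algebraMap F F2 (tr x) = x + x ^ q)
    (χ : MulChar F2 ℂ)
    (hχω : χ (ω : F2) = Complex.exp (2 * Real.pi * Complex.I / e))
    (hχη : ∀ x : F, x ≠ 0 → χ (algebraMap F F2 x) = quadChar F x)
    (ℓ : ℤ) (hℓ : ¬ ((q : ℤ) + 1 ∣ ℓ))
    (H : Finset ℕ)
    (hHres : ∀ r < e / 2, ∃! j, j ∈ H ∧ j % (e / 2) = r)
    (D : Set F)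
    (hD : D = {x : F | ∃ i ∈ H, (1 + algebraMap F F2 x * ((ω ^ ℓ : F2ˣ) : F2)) ∈ cyc ω e (i : ℤ)}) :
    (D.ncard : ℂ) =
      (q : ℂ) / 2 + χ (-1) * (∑ x : F, quadChar F x * ψ x) / (2 * q) +
        (χ (-1) * (∑ x : F, quadChar F x * ψ x) / q) *
          ∑ j ∈ H, ∑ᶠ y ∈ cyc ω e (j : ℤ),
            ψ (tr (((ω ^ ((q : ℤ) * ℓ) : F2ˣ) : F2) *
              (((ω ^ (ℓ * (q : ℤ)) : F2ˣ) : F2) - ((ω ^ ℓ : F2ˣ) : F2))⁻¹ * y)) := by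
  subst hF
  obtain ⟨m, rfl⟩ := heven
  have hm : 0 < m := by
    have := Fintype.one_lt_card (α := F)
    rcases Nat.eq_zero_or_pos m with rfl | hm
    · rw [Nat.zero_dvd, Nat.sub_eq_zero_iff_le] at he
      nlinarith
    · exact hm
  have hζ : IsPrimitiveRoot (χ ω) (m + m) := hχω ▸ Complex.isPrimitiveRoot_exp _ (by omega)
  rw [show (m + m) / 2 = m by omega] at hHres
  have hA : ((ω ^ ((Fintype.card F : ℤ) * ℓ) : F2ˣ) : F2) = ↑(ω ^ ℓ) ^ Fintype.card F := by
    rw [mul_comm, zpow_mul, zpow_natCast, Units.val_pow_eq_pow_val]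
  have hB : (((ω ^ ℓ : F2ˣ) : F2) ^ Fintype.card F) ^ Fintype.card F = ↑(ω ^ ℓ) := by
    rw [← pow_mul, ← sq, ← hF2, FiniteField.pow_card]
  have hD' : D = ↑(univ.filter fun x : F =>
      χ (1 + algebraMap F F2 x * ↑(ω ^ ℓ)) ∈ H.image (χ ω ^ ·)) := by
    ext x
    simp [hD, ← exists_mem_cyc_iff hω (by omega) hζ]
  rw [hD', Set.ncard_coe_finset, mul_comm ℓ, hA, sum_finsum_mem_cyc_eq_sum hω hm hζ hHres]
  exact card_filter_apply_one_add_mul_mem_eq (AddChar.ne_one_iff.mpr hψ) htr hB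
    (coe_zpow_pow_ne_self hω hF2 hℓ) hχη (by simp [hζ.ne_zero (by omega)])
    (fun z hz => neg_apply_mem_image_iff hω hm hζ hHres hz)
    (by rw [MulChar.apply_coe_zpow, zpow_natCast, hζ.pow_eq_neg_one_of_add_self hm] :
      χ ↑(ω ^ (m : ℤ)) = -1)

/-- the size of `D_{ℓ,H}` expressed via character sums over cyclotomic
classes (Proposition 3.4 of the paper). -/
theorem stmt_6 (q e : ℕ) (hq : IsPrimePow q) (hqodd : Odd q)
    (he : e ∣ q ^ 2 - 1) (heven : Even e)
    (F F2 : Type) [Field F] [Fintype F] [Field F2] [Fintype F2] [Algebra F F2]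
    (hF : Fintype.card F = q) (hF2 : Fintype.card F2 = q ^ 2)
    (ω : F2ˣ) (hω : ∀ x : F2ˣ, x ∈ Subgroup.zpowers ω)
    (ψ : AddChar F ℂ) (hψ : ∃ a, ψ a ≠ 1)
    (tr : F2 → F) (htr : ∀ x : F2, algebraMap F F2 (tr x) = x + x ^ q)
    (χ : MulChar F2 ℂ)
    (hχω : χ (ω : F2) = Complex.exp (2 * Real.pi * Complex.I / e))
    (hχη : ∀ x : F, x ≠ 0 → χ (algebraMap F F2 x) = quadChar F x)
    (ℓ : ℤ) (hℓ : ¬ ((q : ℤ) + 1 ∣ ℓ))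
    (H : Finset ℕ) (hHsub : H ⊆ Finset.range e) (hHcard : H.card = e / 2)
    (hHres : ∀ r < e / 2, ∃! j, j ∈ H ∧ j % (e / 2) = r)
    (D : Set F)
    (hD : D = {x : F | ∃ i ∈ H, (1 + algebraMap F F2 x * ((ω ^ ℓ : F2ˣ) : F2)) ∈ cyc ω e (i : ℤ)}) :
    (D.ncard : ℂ) =
      (q : ℂ) / 2 + χ (-1) * (∑ x : F, quadChar F x * ψ x) / (2 * q) +
        (χ (-1) * (∑ x : F, quadChar F x * ψ x) / q) *
          ∑ j ∈ H, ∑ᶠ y ∈ cyc ω e (j : ℤ),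
            ψ (tr (((ω ^ ((q : ℤ) * ℓ) : F2ˣ) : F2) *
              (((ω ^ (ℓ * (q : ℤ)) : F2ˣ) : F2) - ((ω ^ ℓ : F2ˣ) : F2))⁻¹ * y)) :=
  stmt_6_general q e he heven F F2 hF hF2 ω hω ψ hψ tr htr χ hχω hχη ℓ hℓ H hHres D hD
end
end

section
/- Let m be a positive integer such that q = 2m² + 2m + 1 is a prime power, and let C := C_0^{(2,q)} be the set of nonzero squares of F_q. Suppose D₀, D₁ ⊆ F_q satisfy |D₀| = m², |D₁| = m² + m, and for every j ∈ F_q: |D₀ ∩ ((C∪{0}) + j)| + |D₁ ∩ (C + j)| ∈ {m², m²+1, m²+m, m²+m+1} and |D₀ ∩ (C + j)| + |D₁ ∩ ((F_q∖(C∪{0})) + j)| ∈ {m²−1, m², m²+m−1, m²+m}. Then there exists an Hadamard matrix of order n = 4(m² + m + 1) each of whose row sums equals either 2m − 2 or 2m + 2. -/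
/-!
Since `q = 2m² + 2m + 1 ≡ 1 (mod 4)`, the bordered Paley matrix `S` of `𝔽_q` is a symmetric
conference matrix, so `[[S + 1, S - 1], [S - 1, -S - 1]]` is a Hadamard matrix of order
`2(q + 1) = 4(m² + m + 1)`. Negate the columns indexed by `D₀` in the first half and by `D₁` in
the second half, then every row with negative sum: both operations keep the matrix Hadamard and
the row sums become the absolute values of the row sums after the column negation. On a row
indexed by `j ∈ 𝔽_q` that row sum is `±2 + 2|D₀| + 2|D₁| - 4N`, where `N` is one of the two
intersection counts of the hypothesis, so it is `±(2m + 2)` or `±(2m - 2)`; the two border rows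
give `2m + 2` and `2m - 2` from `|D₀|` and `|D₁|` alone.
-/

open Finset Matrix

section Paley

variable {F : Type*} [Field F] [Fintype F] [DecidableEq F]

lemma quadraticChar_sum_sub_mul_sub (hF : ringChar F ≠ 2) {x y : F} (hxy : x ≠ y) :
    ∑ z, quadraticChar F (z - x) * quadraticChar F (z - y) = -1 := by
  set χ := quadraticChar F
  have hc : y - x ≠ 0 := sub_ne_zero.mpr hxy.symm
  have hχc : χ (y - x) ^ 2 = 1 := quadraticChar_sq_one hc
  have hχ1 : χ (-1) ^ 2 = 1 := quadraticChar_sq_one (neg_ne_zero.mpr one_ne_zero)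
  have hJ : jacobiSum χ χ = -χ (-1) := by
    have := jacobiSum_nontrivial_inv (quadraticChar_ne_one hF)
    rwa [(quadraticChar_isQuadratic F).inv] at this
  -- `z = x + (y - x) t` turns the sum into `χ (-1) * J(χ, χ)`
  have hbij : Function.Bijective fun t : F => x + (y - x) * t :=
    (add_right_injective x).comp (mul_right_injective₀ hc) |>.bijective_of_finite
  rw [← hbij.sum_comp]
  have hterm : ∀ t, χ (x + (y - x) * t - x) * χ (x + (y - x) * t - y)
      = χ (-1) * (χ t * χ (1 - t)) := by
    intro t
    rw [show x + (y - x) * t - x = (y - x) * t by ring,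
      show x + (y - x) * t - y = -1 * ((y - x) * (1 - t)) by ring]
    simp only [map_mul]
    linear_combination (χ (-1) * χ t * χ (1 - t)) * hχc
  simp_rw [hterm, ← mul_sum]
  rw [← jacobiSum, hJ]
  linear_combination -hχ1

lemma quadraticChar_sum_sub (hF : ringChar F ≠ 2) (x : F) :
    ∑ z, quadraticChar F (z - x) = 0 :=
  ((Equiv.subRight x).sum_comp _).trans (quadraticChar_sum_zero hF)

variable (F) in
def paleyMatrix : Matrix (Option F) (Option F) ℤ :=
  of fun i k =>
    match i, k with
    | none, none => 0
    | none, some _ => 1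
    | some _, none => 1
    | some x, some y => quadraticChar F (y - x)

@[simp] lemma paleyMatrix_none_none : paleyMatrix F none none = 0 := rfl
@[simp] lemma paleyMatrix_none_some (y : F) : paleyMatrix F none (some y) = 1 := rfl
@[simp] lemma paleyMatrix_some_none (x : F) : paleyMatrix F (some x) none = 1 := rfl
@[simp] lemma paleyMatrix_some_some (x y : F) :
    paleyMatrix F (some x) (some y) = quadraticChar F (y - x) := rfl

lemma paleyMatrix_transpose (h : IsSquare (-1 : F)) : (paleyMatrix F)ᵀ = paleyMatrix F := by
  have hχ : quadraticChar F (-1) = 1 := (quadraticChar_one_iff_isSquare (by simp)).mpr h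
  ext (_ | x) (_ | y)
  · rfl
  · rfl
  · rfl
  · rw [transpose_apply, paleyMatrix_some_some, paleyMatrix_some_some,
      ← neg_sub, neg_eq_neg_one_mul, map_mul, hχ, one_mul]

lemma quadraticChar_sum_sub_sq (x : F) :
    ∑ z, quadraticChar F (z - x) ^ 2 = Fintype.card F - 1 := by
  have hsq : ∀ w : F, quadraticChar F w ^ 2 = 1 - if w = 0 then 1 else 0 := fun w => by
    split_ifs with hw
    · simp [hw]
    · rw [quadraticChar_sq_one hw, sub_zero]
  refine ((Equiv.subRight x).sum_comp (fun w => quadraticChar F w ^ 2)).trans ?_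
  simp only [hsq, sum_sub_distrib, sum_ite_eq', mem_univ, if_true, sum_const, card_univ,
    nsmul_eq_mul, mul_one]

lemma paleyMatrix_mul_transpose (hF : ringChar F ≠ 2) :
    paleyMatrix F * (paleyMatrix F)ᵀ = (Fintype.card F : ℤ) • 1 := by
  ext (_ | x) (_ | y)
  · simp [mul_apply, Fintype.sum_option]
  · simp [mul_apply, Fintype.sum_option, -quadraticChar_apply, quadraticChar_sum_sub hF]
  · simp [mul_apply, Fintype.sum_option, -quadraticChar_apply, quadraticChar_sum_sub hF]
  · rcases eq_or_ne x y with rfl | hxy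
    · simp [mul_apply, Fintype.sum_option, -quadraticChar_apply, ← sq, quadraticChar_sum_sub_sq]
    · simp [mul_apply, Fintype.sum_option, -quadraticChar_apply,
        quadraticChar_sum_sub_mul_sub hF hxy, hxy]

lemma paleyMatrix_apply_self (i : Option F) : paleyMatrix F i i = 0 := by
  cases i <;> simp

lemma paleyMatrix_apply_of_ne {i k : Option F} (h : i ≠ k) :
    paleyMatrix F i k = 1 ∨ paleyMatrix F i k = -1 := by
  rcases i with _ | x <;> rcases k with _ | y
  · exact absurd rfl h
  all_goals simp only [paleyMatrix_none_some, paleyMatrix_some_none, paleyMatrix_some_some,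
    true_or]
  exact quadraticChar_dichotomy (sub_ne_zero.mpr fun hyx => h (by rw [hyx]))

end Paley

section Doubling

variable {n R : Type*} [DecidableEq n]

-- Paley's second construction of Hadamard matrices from symmetric conference matrices.
def conferenceDouble [Ring R] (S : Matrix n n R) : Matrix (n ⊕ n) (n ⊕ n) R :=
  fromBlocks (S + 1) (S - 1) (S - 1) (-S - 1)

lemma conferenceDouble_mul_transpose [Fintype n] [CommRing R] {S : Matrix n n R} (hS : Sᵀ = S)
    {c : R} (hSS : S * Sᵀ = c • 1) :
    conferenceDouble S * (conferenceDouble S)ᵀ = (2 * c + 2) • 1 := by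
  rw [hS] at hSS
  rw [conferenceDouble, fromBlocks_transpose, fromBlocks_multiply, ← fromBlocks_one,
    fromBlocks_smul, smul_zero]
  simp only [transpose_add, transpose_sub, transpose_neg, transpose_one, hS]
  congr 1 <;>
  · simp only [add_mul, mul_add, sub_mul, mul_sub, neg_mul, mul_neg, one_mul, mul_one, hSS]
    module

lemma conferenceDouble_apply_eq_one_or_neg_one [Ring R] {S : Matrix n n R}
    (hdiag : ∀ i, S i i = 0) (hoff : ∀ i k, i ≠ k → S i k = 1 ∨ S i k = -1) (i k : n ⊕ n) :
    conferenceDouble S i k = 1 ∨ conferenceDouble S i k = -1 := by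
  rcases i with i | i <;> rcases k with k | k <;>
  · simp only [conferenceDouble, fromBlocks_apply₁₁, fromBlocks_apply₁₂, fromBlocks_apply₂₁,
      fromBlocks_apply₂₂, Matrix.add_apply, Matrix.sub_apply, Matrix.neg_apply, one_apply]
    rcases eq_or_ne i k with rfl | h
    · simp [hdiag]
    · rcases hoff i k h with h' | h' <;> simp [h', h]

end Doubling

section RowSigns

variable {n R : Type*} [Fintype n] [DecidableEq n]

lemma diagonal_mul_mul_diagonal_mul_transpose [CommRing R] {H : Matrix n n R} {c : R}
    (hH : H * Hᵀ = c • 1) {r d : n → R} (hr : ∀ i, r i * r i = 1) (hd : ∀ i, d i * d i = 1) :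
    diagonal r * H * diagonal d * (diagonal r * H * diagonal d)ᵀ = c • 1 := by
  have hrr : diagonal r * diagonal r = 1 := by simp [diagonal_mul_diagonal, hr]
  have hdd : diagonal d * diagonal d = 1 := by simp [diagonal_mul_diagonal, hd]
  calc diagonal r * H * diagonal d * (diagonal r * H * diagonal d)ᵀ
      = diagonal r * H * (diagonal d * diagonal d) * Hᵀ * diagonal r := by
        simp only [transpose_mul, diagonal_transpose, Matrix.mul_assoc]
    _ = c • (diagonal r * diagonal r) := by
        rw [hdd, Matrix.mul_one, Matrix.mul_assoc (diagonal r), hH, Matrix.mul_smul,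
          Matrix.mul_one, Matrix.smul_mul]
    _ = c • 1 := by rw [hrr]

variable [CommRing R] [LinearOrder R]

def signNormalize (H : Matrix n n R) (d : n → R) : Matrix n n R :=
  diagonal (fun i => if 0 ≤ (H *ᵥ d) i then 1 else -1) * H * diagonal d

lemma signNormalize_apply (H : Matrix n n R) (d : n → R) (i k : n) :
    signNormalize H d i k = (if 0 ≤ (H *ᵥ d) i then 1 else -1) * H i k * d k := by
  simp [signNormalize, diagonal_mul, mul_diagonal]

lemma sum_signNormalize_apply [IsStrictOrderedRing R] (H : Matrix n n R) (d : n → R) (i : n) :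
    ∑ k, signNormalize H d i k = |(H *ᵥ d) i| := by
  simp only [signNormalize_apply, mul_assoc, ← mul_sum]
  change _ * (H *ᵥ d) i = _
  split_ifs with h
  · rw [one_mul, abs_of_nonneg h]
  · rw [neg_one_mul, abs_of_neg (not_le.mp h)]

lemma signNormalize_apply_eq_one_or_neg_one {H : Matrix n n R}
    (hH : ∀ i k, H i k = 1 ∨ H i k = -1) {d : n → R} (hd : ∀ k, d k = 1 ∨ d k = -1) (i k : n) :
    signNormalize H d i k = 1 ∨ signNormalize H d i k = -1 := by
  rw [signNormalize_apply]
  split_ifs <;> rcases hH i k with h | h <;> rcases hd k with h' | h' <;> simp [h, h']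

lemma signNormalize_mul_transpose {H : Matrix n n R} {c : R} (hH : H * Hᵀ = c • 1) {d : n → R}
    (hd : ∀ k, d k = 1 ∨ d k = -1) :
    signNormalize H d * (signNormalize H d)ᵀ = c • 1 :=
  diagonal_mul_mul_diagonal_mul_transpose hH (fun i => by split_ifs <;> simp)
    (fun k => by rcases hd k with h | h <;> simp [h])

end RowSigns

section PmIndicator

variable {α : Type*}

open Classical in
noncomputable def pmIndicator (A : Set α) (x : α) : ℤ := if x ∈ A then 1 else -1

lemma pmIndicator_eq_one_or_neg_one (A : Set α) (x : α) :
    pmIndicator A x = 1 ∨ pmIndicator A x = -1 := by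
  unfold pmIndicator; split_ifs <;> simp

lemma pmIndicator_image_add_right [AddGroup α] (A : Set α) (j x : α) :
    pmIndicator ((· + j) '' A) x = pmIndicator A (x - j) := by
  classical
  have : x ∈ (· + j) '' A ↔ x - j ∈ A := by simp [Set.image_add_right, sub_eq_add_neg]
  unfold pmIndicator
  exact if_congr this rfl rfl

lemma sum_pmIndicator_image_add_right [AddGroup α] [Fintype α] (A : Set α) (j : α) :
    ∑ x, pmIndicator ((· + j) '' A) x = ∑ y, pmIndicator A y := by
  simp only [pmIndicator_image_add_right]
  exact (Equiv.subRight j).sum_comp (pmIndicator A)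

lemma sum_ite_mem_eq_ncard [Fintype α] (S : Set α) [DecidablePred (· ∈ S)] :
    ∑ x, (if x ∈ S then (1 : ℤ) else 0) = S.ncard := by
  simp [sum_boole, Set.ncard_eq_toFinset_card']

lemma sum_pmIndicator_mul [Fintype α] (A D : Set α) :
    ∑ x, pmIndicator A x * pmIndicator D x
      = 4 * (A ∩ D).ncard - 2 * D.ncard - ∑ x, pmIndicator A x := by
  classical
  have hpt : ∀ x, pmIndicator A x * pmIndicator D x = 4 * (if x ∈ A ∩ D then 1 else 0)
      - 2 * (if x ∈ D then 1 else 0) - pmIndicator A x := fun x => by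
    simp only [pmIndicator, Set.mem_inter_iff]
    split_ifs <;> simp_all
  simp only [hpt, sum_sub_distrib, ← mul_sum, sum_ite_mem_eq_ncard]

end PmIndicator

section BorderedSign

variable {α : Type*}

noncomputable def borderedSign (D : Set α) : Option α → ℤ :=
  fun o => o.elim 1 fun x => -pmIndicator D x

lemma borderedSign_eq_one_or_neg_one (D : Set α) (o : Option α) :
    borderedSign D o = 1 ∨ borderedSign D o = -1 := by
  rcases o with _ | x
  · exact .inl rfl
  · rcases pmIndicator_eq_one_or_neg_one D x with h | h <;> simp [borderedSign, h]

lemma mulVec_borderedSign_apply [Fintype α] {ι : Type*} {M : Matrix ι (Option α) ℤ} {i : ι}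
    {A : Set α} (hM : ∀ x, M i (some x) = pmIndicator A x) (D : Set α) :
    (M *ᵥ borderedSign D) i
      = M i none + ∑ x, pmIndicator A x + 2 * D.ncard - 4 * (D ∩ A).ncard := by
  simp only [mulVec_apply_eq_sum, Fintype.sum_option, borderedSign, Option.elim, hM, mul_one,
    mul_neg, sum_neg_distrib, sum_pmIndicator_mul, Set.inter_comm A D]
  ring

end BorderedSign

lemma setOf_ne_zero_and_isSquare_union_zero {M : Type*} [MulZeroClass M] :
    {x : M | x ≠ 0 ∧ IsSquare x} ∪ {0} = {x | IsSquare x} := by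
  ext x
  by_cases hx : x = 0 <;> simp [hx]

section PaleyRows

variable {F : Type*} [Field F] [Fintype F] [DecidableEq F]

lemma pmIndicator_setOf_isSquare (y : F) :
    pmIndicator {y | IsSquare y} y = quadraticChar F y + if y = 0 then 1 else 0 := by
  unfold pmIndicator
  rw [quadraticChar_apply, quadraticCharFun]
  split_ifs <;> simp_all

lemma pmIndicator_setOf_ne_zero_isSquare (y : F) :
    pmIndicator {y | y ≠ 0 ∧ IsSquare y} y = quadraticChar F y - if y = 0 then 1 else 0 := by
  unfold pmIndicator
  rw [quadraticChar_apply, quadraticCharFun]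
  split_ifs <;> simp_all

lemma pmIndicator_setOf_not_isSquare (y : F) :
    pmIndicator {y | ¬IsSquare y} y = -quadraticChar F y - if y = 0 then 1 else 0 := by
  unfold pmIndicator
  rw [quadraticChar_apply, quadraticCharFun]
  split_ifs <;> simp_all

lemma sum_pmIndicator_setOf_isSquare (hF : ringChar F ≠ 2) :
    ∑ y : F, pmIndicator {y | IsSquare y} y = 1 := by
  simp [pmIndicator_setOf_isSquare, sum_add_distrib, -quadraticChar_apply,
    quadraticChar_sum_zero hF]

lemma sum_pmIndicator_setOf_ne_zero_isSquare (hF : ringChar F ≠ 2) :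
    ∑ y : F, pmIndicator {y | y ≠ 0 ∧ IsSquare y} y = -1 := by
  simp [pmIndicator_setOf_ne_zero_isSquare, sum_sub_distrib, -quadraticChar_apply,
    quadraticChar_sum_zero hF]

lemma sum_pmIndicator_setOf_not_isSquare (hF : ringChar F ≠ 2) :
    ∑ y : F, pmIndicator {y | ¬IsSquare y} y = -1 := by
  simp [pmIndicator_setOf_not_isSquare, sum_sub_distrib, -quadraticChar_apply,
    quadraticChar_sum_zero hF]

lemma paleyMatrix_add_one_some_some (j x : F) :
    (paleyMatrix F + 1) (some j) (some x) = pmIndicator ((· + j) '' {y | IsSquare y}) x := by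
  rw [pmIndicator_image_add_right, pmIndicator_setOf_isSquare]
  simp [one_apply, sub_eq_zero, eq_comm]

lemma paleyMatrix_sub_one_some_some (j x : F) :
    (paleyMatrix F - 1) (some j) (some x)
      = pmIndicator ((· + j) '' {y | y ≠ 0 ∧ IsSquare y}) x := by
  rw [pmIndicator_image_add_right, pmIndicator_setOf_ne_zero_isSquare]
  simp [one_apply, sub_eq_zero, eq_comm]

lemma neg_paleyMatrix_sub_one_some_some (j x : F) :
    (-paleyMatrix F - 1) (some j) (some x) = pmIndicator ((· + j) '' {y | ¬IsSquare y}) x := by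
  rw [pmIndicator_image_add_right, pmIndicator_setOf_not_isSquare]
  simp [one_apply, sub_eq_zero, eq_comm]

variable (D₀ D₁ : Set F)

lemma conferenceDouble_paleyMatrix_mulVec_inl_some (hF : ringChar F ≠ 2) (j : F) :
    (conferenceDouble (paleyMatrix F) *ᵥ Sum.elim (borderedSign D₀) (borderedSign D₁))
        (.inl (some j))
      = 2 + 2 * D₀.ncard + 2 * D₁.ncard
        - 4 * ((D₀ ∩ ((· + j) '' {y | IsSquare y})).ncard
          + (D₁ ∩ ((· + j) '' {y | y ≠ 0 ∧ IsSquare y})).ncard) := by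
  rw [conferenceDouble, fromBlocks_mulVec, Sum.elim_inl, Sum.elim_comp_inl, Sum.elim_comp_inr,
    Pi.add_apply, mulVec_borderedSign_apply (paleyMatrix_add_one_some_some j),
    mulVec_borderedSign_apply (paleyMatrix_sub_one_some_some j),
    sum_pmIndicator_image_add_right, sum_pmIndicator_image_add_right,
    sum_pmIndicator_setOf_isSquare hF, sum_pmIndicator_setOf_ne_zero_isSquare hF]
  simp [one_apply]
  ring

lemma conferenceDouble_paleyMatrix_mulVec_inr_some (hF : ringChar F ≠ 2) (j : F) :
    (conferenceDouble (paleyMatrix F) *ᵥ Sum.elim (borderedSign D₀) (borderedSign D₁))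
        (.inr (some j))
      = -2 + 2 * D₀.ncard + 2 * D₁.ncard
        - 4 * ((D₀ ∩ ((· + j) '' {y | y ≠ 0 ∧ IsSquare y})).ncard
          + (D₁ ∩ ((· + j) '' {y | ¬IsSquare y})).ncard) := by
  rw [conferenceDouble, fromBlocks_mulVec, Sum.elim_inr, Sum.elim_comp_inl, Sum.elim_comp_inr,
    Pi.add_apply, mulVec_borderedSign_apply (paleyMatrix_sub_one_some_some j),
    mulVec_borderedSign_apply (neg_paleyMatrix_sub_one_some_some j),
    sum_pmIndicator_image_add_right, sum_pmIndicator_image_add_right,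
    sum_pmIndicator_setOf_ne_zero_isSquare hF, sum_pmIndicator_setOf_not_isSquare hF]
  simp [one_apply]
  ring

lemma conferenceDouble_paleyMatrix_mulVec_inl_none :
    (conferenceDouble (paleyMatrix F) *ᵥ Sum.elim (borderedSign D₀) (borderedSign D₁))
        (.inl none)
      = 2 * Fintype.card F - 2 * D₀.ncard - 2 * D₁.ncard := by
  rw [conferenceDouble, fromBlocks_mulVec, Sum.elim_inl, Sum.elim_comp_inl, Sum.elim_comp_inr,
    Pi.add_apply, mulVec_borderedSign_apply (A := Set.univ) (by simp [pmIndicator]),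
    mulVec_borderedSign_apply (A := Set.univ) (by simp [pmIndicator])]
  simp [pmIndicator]
  ring

lemma conferenceDouble_paleyMatrix_mulVec_inr_none :
    (conferenceDouble (paleyMatrix F) *ᵥ Sum.elim (borderedSign D₀) (borderedSign D₁))
        (.inr none)
      = 2 * D₁.ncard - 2 * D₀.ncard - 2 := by
  rw [conferenceDouble, fromBlocks_mulVec, Sum.elim_inr, Sum.elim_comp_inl, Sum.elim_comp_inr,
    Pi.add_apply, mulVec_borderedSign_apply (A := Set.univ) (by simp [pmIndicator]),
    mulVec_borderedSign_apply (A := ∅) (by simp [pmIndicator])]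
  simp [pmIndicator]
  ring

lemma abs_conferenceDouble_paleyMatrix_mulVec {m : ℕ} (hm : 0 < m) (hF : ringChar F ≠ 2)
    (hq : Fintype.card F = 2 * m ^ 2 + 2 * m + 1) (hD₀ : D₀.ncard = m ^ 2)
    (hD₁ : D₁.ncard = m ^ 2 + m)
    (hint1 : ∀ j : F,
      (D₀ ∩ ((· + j) '' {y | IsSquare y})).ncard
          + (D₁ ∩ ((· + j) '' {y | y ≠ 0 ∧ IsSquare y})).ncard ∈
        ({m ^ 2, m ^ 2 + 1, m ^ 2 + m, m ^ 2 + m + 1} : Set ℕ))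
    (hint2 : ∀ j : F,
      (D₀ ∩ ((· + j) '' {y | y ≠ 0 ∧ IsSquare y})).ncard
          + (D₁ ∩ ((· + j) '' {y | ¬IsSquare y})).ncard ∈
        ({m ^ 2 - 1, m ^ 2, m ^ 2 + m - 1, m ^ 2 + m} : Set ℕ))
    (i : Option F ⊕ Option F) :
    |(conferenceDouble (paleyMatrix F) *ᵥ Sum.elim (borderedSign D₀) (borderedSign D₁)) i|
        = 2 * m - 2 ∨
      |(conferenceDouble (paleyMatrix F) *ᵥ Sum.elim (borderedSign D₀) (borderedSign D₁)) i|
        = 2 * m + 2 := by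
  simp only [abs_eq_max_neg]
  rcases i with (_ | j) | (_ | j)
  · rw [conferenceDouble_paleyMatrix_mulVec_inl_none, hq, hD₀, hD₁]
    omega
  · have hN := hint1 j
    simp only [Set.mem_insert_iff, Set.mem_singleton_iff] at hN
    rw [conferenceDouble_paleyMatrix_mulVec_inl_some _ _ hF, hD₀, hD₁]
    omega
  · rw [conferenceDouble_paleyMatrix_mulVec_inr_none, hD₀, hD₁]
    omega
  · have hN := hint2 j
    simp only [Set.mem_insert_iff, Set.mem_singleton_iff] at hN
    rw [conferenceDouble_paleyMatrix_mulVec_inr_some _ _ hF, hD₀, hD₁]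
    omega

end PaleyRows

lemma exists_fin_matrix_of_card_eq {ι R : Type*} [Fintype ι] [DecidableEq ι] [Ring R] {N : ℕ}
    (hN : Fintype.card ι = N) (M : Matrix ι ι R) (P : R → Prop)
    (hpm : ∀ i k, M i k = 1 ∨ M i k = -1) (hM : M * Mᵀ = (N : R) • 1)
    (hP : ∀ i, P (∑ k, M i k)) :
    ∃ H : Matrix (Fin N) (Fin N) R, (∀ i j, H i j = 1 ∨ H i j = -1) ∧
      H * Hᵀ = (N : R) • 1 ∧ ∀ i, P (∑ j, H i j) := by
  let e := Fintype.equivFinOfCardEq hN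
  refine ⟨reindex e e M, fun i j => hpm _ _, ?_, fun i => ?_⟩
  · rw [transpose_reindex, reindex_apply, reindex_apply, submatrix_mul_equiv, hM]
    ext i j
    simp [one_apply]
  · have := hP (e.symm i)
    rwa [← e.symm.sum_comp] at this

/-- Suitable intersection conditions on a pair `D₀, D₁ ⊆ F_q`,
`q = 2m²+2m+1`, yield a biregular Hadamard matrix of order `4(m²+m+1)` with row sums
`2m−2` or `2m+2`. -/
theorem stmt_13 (m : ℕ) (hm : 0 < m)
    (F : Type) [Field F] [Fintype F] (hF : Fintype.card F = 2 * m ^ 2 + 2 * m + 1)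
    (C : Set F) (hC : C = {x : F | x ≠ 0 ∧ IsSquare x})
    (D₀ D₁ : Set F) (hD₀ : D₀.ncard = m ^ 2) (hD₁ : D₁.ncard = m ^ 2 + m)
    (hint1 : ∀ j : F,
      (D₀ ∩ ((fun x => x + j) '' (C ∪ {0}))).ncard + (D₁ ∩ ((fun x => x + j) '' C)).ncard ∈
        ({m ^ 2, m ^ 2 + 1, m ^ 2 + m, m ^ 2 + m + 1} : Set ℕ))
    (hint2 : ∀ j : F,
      (D₀ ∩ ((fun x => x + j) '' C)).ncard +
          (D₁ ∩ ((fun x => x + j) '' (Set.univ \ (C ∪ {0})))).ncard ∈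
        ({m ^ 2 - 1, m ^ 2, m ^ 2 + m - 1, m ^ 2 + m} : Set ℕ)) :
    ∃ H : Matrix (Fin (4 * (m ^ 2 + m + 1))) (Fin (4 * (m ^ 2 + m + 1))) ℤ,
      (∀ i j, H i j = 1 ∨ H i j = -1) ∧
      H * H.transpose = ((4 * (m ^ 2 + m + 1) : ℕ) : ℤ) • (1 : Matrix _ _ ℤ) ∧
      (∀ i, (∑ j, H i j) = 2 * (m : ℤ) - 2 ∨ (∑ j, H i j) = 2 * (m : ℤ) + 2) := by
  classical
  have hq : Fintype.card F % 4 = 1 := by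
    obtain ⟨r, hr⟩ := Nat.even_mul_succ_self m
    have : m ^ 2 + m = r + r := by rw [← hr]; ring
    omega
  have hF2 : ringChar F ≠ 2 := fun h => by
    have := FiniteField.even_card_of_char_two h
    omega
  have hneg : IsSquare (-1 : F) := FiniteField.isSquare_neg_one_iff.mpr (by omega)
  subst hC
  rw [setOf_ne_zero_and_isSquare_union_zero] at hint1 hint2
  rw [← Set.compl_eq_univ_sdiff, Set.compl_ofPred] at hint2
  set H := conferenceDouble (paleyMatrix F)
  set d := Sum.elim (borderedSign D₀) (borderedSign D₁)
  have hH : ∀ i k, H i k = 1 ∨ H i k = -1 :=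
    conferenceDouble_apply_eq_one_or_neg_one paleyMatrix_apply_self
      fun _ _ => paleyMatrix_apply_of_ne
  have hd : ∀ k, d k = 1 ∨ d k = -1 := by
    rintro (o | o) <;> exact borderedSign_eq_one_or_neg_one _ o
  refine exists_fin_matrix_of_card_eq (by simp [hF]; ring) (signNormalize H d)
    (fun s => s = 2 * (m : ℤ) - 2 ∨ s = 2 * (m : ℤ) + 2)
    (signNormalize_apply_eq_one_or_neg_one hH hd) ?_ fun i => ?_
  · rw [signNormalize_mul_transpose (conferenceDouble_mul_transpose (paleyMatrix_transpose hneg)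
      (paleyMatrix_mul_transpose hF2)) hd, hF]
    congr 1
    push_cast
    ring
  · rw [sum_signNormalize_apply]
    exact abs_conferenceDouble_paleyMatrix_mulVec D₀ D₁ hm hF2 hF hD₀ hD₁ hint1 hint2 i
end
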